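/- Let Γ ⊆ Γ' be closed subspaces of a complex Hilbert space Ĥ, β = Γ' ∩ Γ^⊥, and let M be a closed subspace of Ĥ that is Fredholm with respect to (Γ,Γ'). Let L ⊆ β be a closed subspace such that (γ^{-1}(L), M) = (L + Γ, M) is a Fredholm pair of subspaces of Ĥ. Then (L, γ_!M) is a Fredholm pair of subspaces of β and ind_Ĥ(L + Γ, M) = ind_β(L, γ_!M) + dim(M ∩ Γ) − dim(Ĥ/(M + Γ')) ∈ ℤ. -/

import Mathlib

noncomputable section

open Classical in
/-- Orthogonal projection onto a closed (complete) submodule, as a continuous linear map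
on the ambient space (defined to be `0` on non-complete submodules). -/
noncomputable def orthProj {W : Type*} [NormedAddCommGroup W] [InnerProductSpace ℂ W]
    (M : Submodule ℂ W) : W →L[ℂ] W :=
  if h : IsComplete (M : Set W) then
    haveI : CompleteSpace M := h.completeSpace_coe
    M.subtypeL.comp (M.orthogonalProjectionOnto)
  else 0

/-- `(M, N)` is a Fredholm pair of subspaces of `W`: the sum is closed, the intersection
is finite-dimensional and the sum has finite codimension. -/
def FredholmPair {W : Type*} [NormedAddCommGroup W] [InnerProductSpace ℂ W]
    (M N : Submodule ℂ W) : Prop :=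
  IsClosed ((M ⊔ N : Submodule ℂ W) : Set W) ∧
  FiniteDimensional ℂ ↥(M ⊓ N) ∧
  FiniteDimensional ℂ (W ⧸ (M ⊔ N))

/-- `(M, N)` is a transversal pair of subspaces of `W`. -/
def TransversalPair {W : Type*} [NormedAddCommGroup W] [InnerProductSpace ℂ W]
    (M N : Submodule ℂ W) : Prop :=
  M ⊓ N = ⊥ ∧ M ⊔ N = ⊤

/-- `(L, N)` is a Fredholm pair of subspaces of the subspace `β` of `W` (the codimension
is computed inside `β`). -/
def FredholmPairIn {W : Type*} [NormedAddCommGroup W] [InnerProductSpace ℂ W]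
    (β L N : Submodule ℂ W) : Prop :=
  IsClosed ((L ⊔ N : Submodule ℂ W) : Set W) ∧
  FiniteDimensional ℂ ↥(L ⊓ N) ∧
  FiniteDimensional ℂ (↥β ⧸ Submodule.comap β.subtype (L ⊔ N))

/-- `(L, N)` is a transversal pair of subspaces of the subspace `β` of `W`. -/
def TransversalPairIn {W : Type*} [NormedAddCommGroup W] [InnerProductSpace ℂ W]
    (β L N : Submodule ℂ W) : Prop :=
  L ⊓ N = ⊥ ∧ L ⊔ N = β

/-- The push-forward `γ_!M = γ(M ∩ Γ')`, where `β = Γ' ∩ Γ^⊥` and `γ` is the restriction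
to `Γ'` of the orthogonal projection onto `β`. -/
def gammaPush {W : Type*} [NormedAddCommGroup W] [InnerProductSpace ℂ W]
    (Γ Γ' M : Submodule ℂ W) : Submodule ℂ W :=
  (M ⊓ Γ').map (orthProj (Γ' ⊓ Γᗮ) : W →ₗ[ℂ] W)

/-- `M` is Fredholm with respect to `(Γ, Γ')`: the pair `(M, Γ)` is lower semi-Fredholm
and the pair `(M, Γ')` is upper semi-Fredholm. -/
def FredholmWrt {W : Type*} [NormedAddCommGroup W] [InnerProductSpace ℂ W]
    (Γ Γ' M : Submodule ℂ W) : Prop :=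
  (IsClosed ((M ⊔ Γ : Submodule ℂ W) : Set W) ∧ FiniteDimensional ℂ ↥(M ⊓ Γ)) ∧
  (IsClosed ((M ⊔ Γ' : Submodule ℂ W) : Set W) ∧ FiniteDimensional ℂ (W ⧸ (M ⊔ Γ')))

/-- `M` is transversal to `(Γ, Γ')`: `M + Γ` is closed, `M ∩ Γ = 0` and `M + Γ' = W`. -/
def TransversalWrt {W : Type*} [NormedAddCommGroup W] [InnerProductSpace ℂ W]
    (Γ Γ' M : Submodule ℂ W) : Prop :=
  IsClosed ((M ⊔ Γ : Submodule ℂ W) : Set W) ∧ M ⊓ Γ = ⊥ ∧ M ⊔ Γ' = ⊤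

open Module in
/-- with `β = Γ' ∩ Γ^⊥`, if `M` is Fredholm with respect to `(Γ, Γ')` and
`L ⊆ β` is closed with `(L + Γ, M)` a Fredholm pair in `Ĥ`, then `(L, γ_!M)` is a
Fredholm pair in `β` and
`ind(L + Γ, M) = ind_β(L, γ_!M) + dim(M ∩ Γ) − dim(Ĥ/(M + Γ'))` in `ℤ`. -/
theorem statement_17
    {W : Type*} [NormedAddCommGroup W] [InnerProductSpace ℂ W] [CompleteSpace W]
    (Γ Γ' M L : Submodule ℂ W)
    (hΓ : IsClosed ((Γ : Submodule ℂ W) : Set W))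
    (hΓ' : IsClosed ((Γ' : Submodule ℂ W) : Set W))
    (hle : Γ ≤ Γ')
    (hM : IsClosed ((M : Submodule ℂ W) : Set W))
    (hMF : FredholmWrt Γ Γ' M)
    (hL : IsClosed ((L : Submodule ℂ W) : Set W)) (hLβ : L ≤ Γ' ⊓ Γᗮ)
    (hLF : FredholmPair (L ⊔ Γ) M) :
    FredholmPairIn (Γ' ⊓ Γᗮ) L (gammaPush Γ Γ' M) ∧
    (finrank ℂ ↥((L ⊔ Γ) ⊓ M) : ℤ) - (finrank ℂ (W ⧸ ((L ⊔ Γ) ⊔ M)) : ℤ) =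
      ((finrank ℂ ↥(L ⊓ gammaPush Γ Γ' M) : ℤ) -
        (finrank ℂ (↥(Γ' ⊓ Γᗮ) ⧸
          Submodule.comap (Γ' ⊓ Γᗮ).subtype (L ⊔ gammaPush Γ Γ' M)) : ℤ)) +
      (finrank ℂ ↥(M ⊓ Γ) : ℤ) - (finrank ℂ (W ⧸ (M ⊔ Γ')) : ℤ) := by
  classical
  set β : Submodule ℂ W := Γ' ⊓ Γᗮ with hβdef
  set N : Submodule ℂ W := gammaPush Γ Γ' M with hNdef
  set S : Submodule ℂ W := (L ⊔ Γ) ⊓ M with hSdef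
  set T : Submodule ℂ W := (L ⊔ Γ) ⊔ M with hTdef
  have hβclosed : IsClosed (β : Set W) := by
    have : (β : Set W) = (Γ' : Set W) ∩ (Γᗮ : Set W) := rfl
    rw [this]
    exact hΓ'.inter Γ.isClosed_orthogonal
  haveI : CompleteSpace β := hβclosed.completeSpace_coe
  haveI : CompleteSpace Γ := hΓ.completeSpace_coe
  have hproj : orthProj β = β.subtypeL.comp (β.orthogonalProjectionOnto) := by
    rw [orthProj, dif_pos hβclosed.isComplete]
  have hφmem : ∀ x : W, orthProj β x ∈ β := by
    intro x; rw [hproj]; exact (β.orthogonalProjectionOnto x).2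
  have hφβ : ∀ x ∈ β, orthProj β x = x := by
    intro x hx; rw [hproj]
    exact Submodule.starProjection_eq_self_iff.mpr hx
  have hGammaPerp : Γ ≤ βᗮ :=
    le_trans Γ.le_orthogonal_orthogonal (Submodule.orthogonal_le inf_le_right)
  have hφΓ : ∀ x ∈ Γ, orthProj β x = 0 := by
    intro x hx; rw [hproj]
    simp [Submodule.orthogonalProjectionOnto_apply_of_mem_orthogonal (hGammaPerp hx)]
  have hsub : ∀ x ∈ Γ', x - orthProj β x ∈ Γ := by
    intro x hx
    have h1 : x - (Γ.orthogonalProjectionOnto x : W) ∈ Γᗮ :=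
      Submodule.sub_starProjection_mem_orthogonal (K := Γ) x
    have h2 : x - (Γ.orthogonalProjectionOnto x : W) ∈ β :=
      ⟨Submodule.sub_mem _ hx (hle (Γ.orthogonalProjectionOnto x).2), h1⟩
    have h3 : orthProj β x = x - (Γ.orthogonalProjectionOnto x : W) := by
      have e : x = (Γ.orthogonalProjectionOnto x : W) + (x - (Γ.orthogonalProjectionOnto x : W)) := by
        abel
      calc orthProj β x
          = orthProj β ((Γ.orthogonalProjectionOnto x : W))
            + orthProj β (x - (Γ.orthogonalProjectionOnto x : W)) := by
            rw [← map_add]; exact congrArg _ e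
        _ = x - (Γ.orthogonalProjectionOnto x : W) := by
            rw [hφΓ _ (Γ.orthogonalProjectionOnto x).2, hφβ _ h2, zero_add]
    rw [h3]
    simpa using (Γ.orthogonalProjectionOnto x).2
  have hLβ' : L ≤ β := hLβ
  have hLΓΓ' : L ⊔ Γ ≤ Γ' := sup_le (hLβ'.trans inf_le_left) hle
  -- N facts
  have hNle_β : N ≤ β := by
    rw [hNdef, gammaPush]
    rintro _ ⟨m, hm, rfl⟩
    exact hφmem m
  have hNle : N ≤ M ⊔ Γ := by
    rw [hNdef, gammaPush]
    rintro _ ⟨m, hm, rfl⟩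
    have : orthProj (Γ' ⊓ Γᗮ) m = m - (m - orthProj β m) := by rw [hβdef]; abel
    rw [ContinuousLinearMap.coe_coe, this]
    exact Submodule.sub_mem _ (Submodule.mem_sup_left hm.1)
      (Submodule.mem_sup_right (hsub m hm.2))
  -- map of S
  have hmapS : Submodule.map (orthProj β : W →ₗ[ℂ] W) S = L ⊓ N := by
    apply le_antisymm
    · rintro _ ⟨x, ⟨hxLΓ, hxM⟩, rfl⟩
      obtain ⟨l, hl, g, hg, rfl⟩ := Submodule.mem_sup.mp hxLΓ
      have hφx : orthProj β (l + g) = l := by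
        rw [map_add, hφβ l (hLβ' hl), hφΓ g hg, add_zero]
      constructor
      · rw [ContinuousLinearMap.coe_coe, hφx]; exact hl
      · rw [hNdef, gammaPush, ← hβdef]
        exact Submodule.mem_map_of_mem ⟨hxM, hLΓΓ' hxLΓ⟩
    · rintro x ⟨hxL, hxN⟩
      rw [hNdef, gammaPush, ← hβdef] at hxN
      obtain ⟨m, hm, rfl⟩ := hxN
      refine ⟨m, ⟨?_, hm.1⟩, rfl⟩
      have : m = orthProj β m + (m - orthProj β m) := by abel
      rw [this]
      exact Submodule.add_mem _ (Submodule.mem_sup_left hxL)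
        (Submodule.mem_sup_right (hsub m hm.2))
  have hβT : β ⊓ T = L ⊔ N := by
    apply le_antisymm
    · rintro x ⟨hxβ, hxT⟩
      rw [hTdef, sup_assoc] at hxT
      obtain ⟨l, hl, y, hy, rfl⟩ := Submodule.mem_sup.mp hxT
      obtain ⟨g, hg, m, hm, rfl⟩ := Submodule.mem_sup.mp hy
      have hmΓ' : m ∈ Γ' := by
        have h1 : (l + (g + m)) ∈ Γ' := (inf_le_left : β ≤ Γ') hxβ
        have : m = (l + (g + m)) - l - g := by abel
        rw [this]
        exact Submodule.sub_mem _ (Submodule.sub_mem _ h1 (hLΓΓ' (Submodule.mem_sup_left hl)))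
          (hle hg)
      have hx : l + (g + m) = orthProj β (l + (g + m)) := (hφβ _ hxβ).symm
      rw [hx, map_add, map_add, hφβ l (hLβ' hl), hφΓ g hg, zero_add]
      refine Submodule.add_mem _ (Submodule.mem_sup_left hl) (Submodule.mem_sup_right ?_)
      rw [hNdef, gammaPush, ← hβdef]
      exact Submodule.mem_map_of_mem ⟨hm, hmΓ'⟩
    · refine sup_le (le_inf hLβ' ?_) (le_inf hNle_β ?_)
      · exact le_trans le_sup_left le_sup_left
      · refine hNle.trans (sup_le le_sup_right (le_trans le_sup_right le_sup_left))
  -- finite dimensionality of S and W/T from hLF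
  haveI hSfd : FiniteDimensional ℂ S := hLF.2.1
  haveI hTfd : FiniteDimensional ℂ (W ⧸ T) := hLF.2.2
  -- rank-nullity for f
  have hcoe : ∀ p : Submodule ℂ W,
      Submodule.map ((orthProj β : W →L[ℂ] W) : W →ₗ[ℂ] W) p = Submodule.map (orthProj β : W →ₗ[ℂ] W) p :=
    fun p => rfl
  set f : S →ₗ[ℂ] W :=
    (((orthProj β : W →L[ℂ] W) : W →ₗ[ℂ] W)).comp S.subtype with hfdef
  have hrange : LinearMap.range f = L ⊓ N := by
    rw [hfdef, LinearMap.range_comp, Submodule.range_subtype, hcoe, hmapS]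
  have hMΓle : M ⊓ Γ ≤ S := le_inf (inf_le_right.trans le_sup_right) inf_le_left
  have hker : LinearMap.ker f = Submodule.comap S.subtype (M ⊓ Γ) := by
    ext x
    simp only [LinearMap.mem_ker, hfdef, LinearMap.comp_apply, Submodule.comap_coe,
      Submodule.mem_comap, Submodule.subtype_apply, Submodule.mem_inf,
      ContinuousLinearMap.coe_coe]
    constructor
    · intro h
      refine ⟨x.2.2, ?_⟩
      have := hsub (x : W) (hLΓΓ' x.2.1)
      rwa [h, sub_zero] at this
    · intro h
      exact hφΓ _ h.2
  have hA : finrank ℂ S = finrank ℂ ↥(L ⊓ N) + finrank ℂ ↥(M ⊓ Γ) := by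
    have h0 := LinearMap.finrank_range_add_finrank_ker f
    rw [hrange, hker] at h0
    rw [(Submodule.comapSubtypeEquivOfLe hMΓle).finrank_eq] at h0
    omega
  haveI hLNfd : FiniteDimensional ℂ (L ⊓ N : Submodule ℂ W) := by
    rw [← hrange]; infer_instance
  -- quotient part
  have hTle : T ≤ M ⊔ Γ' :=
    sup_le (hLΓΓ'.trans le_sup_right) le_sup_left
  set g : β →ₗ[ℂ] (W ⧸ T) := T.mkQ.comp β.subtype with hgdef
  have hmkQT : Submodule.map T.mkQ T = ⊥ := by
    rw [eq_bot_iff]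
    rintro _ ⟨x, hx, rfl⟩
    simpa [Submodule.mkQ_apply, Submodule.Quotient.mk_eq_zero] using hx
  have hβsupT : β ⊔ T = (M ⊔ Γ') ⊔ T := by
    apply le_antisymm
    · exact sup_le ((inf_le_left : β ≤ Γ').trans (le_sup_right.trans le_sup_left)) le_sup_right
    · refine sup_le (sup_le ?_ ?_) le_sup_right
      · have hMT : M ≤ T := hTdef ▸ le_sup_right
        exact hMT.trans le_sup_right
      · intro x hx
        have hd : x = orthProj β x + (x - orthProj β x) := by abel
        rw [hd]
        exact Submodule.add_mem _ (Submodule.mem_sup_left (hφmem x))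
          (Submodule.mem_sup_right ((le_sup_right.trans le_sup_left : Γ ≤ T) (hsub x hx)))
  have hrg : LinearMap.range g = Submodule.map T.mkQ (M ⊔ Γ') := by
    rw [hgdef, LinearMap.range_comp, Submodule.range_subtype]
    have h1 : Submodule.map T.mkQ β = Submodule.map T.mkQ (β ⊔ T) := by
      rw [Submodule.map_sup, hmkQT, sup_bot_eq]
    have h2 : Submodule.map T.mkQ (M ⊔ Γ') = Submodule.map T.mkQ ((M ⊔ Γ') ⊔ T) := by
      rw [Submodule.map_sup (M ⊔ Γ') T, hmkQT, sup_bot_eq]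
    rw [h1, hβsupT, ← h2]
  have hkg : LinearMap.ker g = Submodule.comap β.subtype (L ⊔ N) := by
    rw [hgdef, LinearMap.ker_comp, Submodule.ker_mkQ]
    ext x
    simp only [Submodule.mem_comap, Submodule.subtype_apply]
    constructor
    · intro h
      have : (x : W) ∈ β ⊓ T := ⟨x.2, h⟩
      rwa [hβT] at this
    · intro h
      have : (x : W) ∈ β ⊓ T := by rw [hβT]; exact h
      exact this.2
  have e1 := g.quotKerEquivRange
  rw [hkg, hrg] at e1
  haveI : FiniteDimensional ℂ (Submodule.map T.mkQ (M ⊔ Γ')) :=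
    FiniteDimensional.finiteDimensional_submodule _
  haveI hqfd : FiniteDimensional ℂ (β ⧸ Submodule.comap β.subtype (L ⊔ N)) :=
    Module.Finite.equiv e1.symm
  have hB : finrank ℂ (W ⧸ T)
      = finrank ℂ (β ⧸ Submodule.comap β.subtype (L ⊔ N)) + finrank ℂ (W ⧸ (M ⊔ Γ')) := by
    have h1 := Submodule.finrank_quotient_add_finrank (Submodule.map T.mkQ (M ⊔ Γ'))
    have h2 : finrank ℂ ((W ⧸ T) ⧸ Submodule.map T.mkQ (M ⊔ Γ'))
        = finrank ℂ (W ⧸ (M ⊔ Γ')) :=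
      (Submodule.quotientQuotientEquivQuotient T (M ⊔ Γ') hTle).finrank_eq
    have h3 : finrank ℂ (β ⧸ Submodule.comap β.subtype (L ⊔ N))
        = finrank ℂ (Submodule.map T.mkQ (M ⊔ Γ')) := e1.finrank_eq
    omega
  have hclosed : IsClosed ((L ⊔ N : Submodule ℂ W) : Set W) := by
    rw [← hβT]
    have : ((β ⊓ T : Submodule ℂ W) : Set W) = (β : Set W) ∩ (T : Set W) := rfl
    rw [this]
    exact hβclosed.inter hLF.1
  refine ⟨⟨hclosed, hLNfd, hqfd⟩, ?_⟩
  rw [hA, hB]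
  push_cast
  ring
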